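/- arXiv:1705.09771 — 3 statements merged into one kernel-verified Lean document; each statement's English description precedes it below -/
import Mathlib

section
/- The function L(θ) = (w/ln 10)·ln(Δh/sin θ) + g₃(1 - cos θ)² (with w = 20, g₃ = 15, Δh > 0) is strictly convex on the interval (0, π/2], since its second derivative (w/ln 10)·(1/sin²θ) + 2g₃ cos θ(1 - cos θ) + 2g₃ sin²θ is strictly positive for 0 < θ ≤ π/2. -/
open Real Set

private lemma sin_pos_of_mem {θ : ℝ} (hθ : θ ∈ Ioc 0 (π / 2)) : 0 < Real.sin θ :=
  Real.sin_pos_of_pos_of_lt_pi hθ.1 (lt_of_le_of_lt hθ.2 (by linarith [Real.pi_pos]))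

private lemma hasDerivAt_f (Δh : ℝ) (hΔh : 0 < Δh) {θ : ℝ} (hs : Real.sin θ ≠ 0) :
    HasDerivAt (fun θ => (20 / Real.log 10) * Real.log (Δh / Real.sin θ)
        + 15 * (1 - Real.cos θ) ^ 2)
      ((20 / Real.log 10) * (-(Real.cos θ / Real.sin θ))
        + 30 * (1 - Real.cos θ) * Real.sin θ) θ := by
  have hdiv : HasDerivAt (fun θ => Δh / Real.sin θ)
      (-Δh * Real.cos θ / Real.sin θ ^ 2) θ := by
    have := (hasDerivAt_const θ Δh).div (Real.hasDerivAt_sin θ) hs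
    refine this.congr_deriv ?_
    field_simp
    ring
  have hne : Δh / Real.sin θ ≠ 0 := div_ne_zero (ne_of_gt hΔh) hs
  have hlog := hdiv.log hne
  have hcos : HasDerivAt (fun θ => 15 * (1 - Real.cos θ) ^ 2)
      (30 * (1 - Real.cos θ) * Real.sin θ) θ := by
    have h1 : HasDerivAt (fun θ => (1 : ℝ) - Real.cos θ) (Real.sin θ) θ := by
      simpa using (Real.hasDerivAt_cos θ).const_sub 1
    have := (h1.pow 2).const_mul (15 : ℝ)
    refine this.congr_deriv ?_
    ring
  have := (hlog.const_mul (20 / Real.log 10)).add hcos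
  refine this.congr_deriv ?_
  field_simp

private lemma hasDerivAt_D {θ : ℝ} (hs : Real.sin θ ≠ 0) :
    HasDerivAt (fun θ => (20 / Real.log 10) * (-(Real.cos θ / Real.sin θ))
        + 30 * (1 - Real.cos θ) * Real.sin θ)
      ((20 / Real.log 10) * (1 / Real.sin θ ^ 2)
          + 2 * 15 * Real.cos θ * (1 - Real.cos θ) + 2 * 15 * Real.sin θ ^ 2) θ := by
  have hcot : HasDerivAt (fun θ => Real.cos θ / Real.sin θ)
      ((-Real.sin θ * Real.sin θ - Real.cos θ * Real.cos θ) / Real.sin θ ^ 2) θ :=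
    (Real.hasDerivAt_cos θ).div (Real.hasDerivAt_sin θ) hs
  have h2 : HasDerivAt (fun θ => 30 * (1 - Real.cos θ) * Real.sin θ)
      (30 * Real.sin θ * Real.sin θ + 30 * (1 - Real.cos θ) * Real.cos θ) θ := by
    have h1 : HasDerivAt (fun θ => 30 * (1 - Real.cos θ)) (30 * Real.sin θ) θ := by
      simpa using ((Real.hasDerivAt_cos θ).const_sub 1).const_mul (30 : ℝ)
    exact h1.mul (Real.hasDerivAt_sin θ)
  have := (hcot.neg.const_mul (20 / Real.log 10)).add h2
  refine this.congr_deriv ?_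
  have h1 : -Real.sin θ * Real.sin θ - Real.cos θ * Real.cos θ = -1 := by
    nlinarith [Real.sin_sq_add_cos_sq θ]
  rw [h1]
  field_simp
  ring

/-- The θ-dependent part of the low-SHF path loss is strictly convex on (0, π/2],
since its second derivative is strictly positive there. -/
theorem lowSHF_loss_strictConvex (Δh : ℝ) (hΔh : 0 < Δh) :
    (∀ θ ∈ Ioc 0 (π / 2),
      0 < (20 / Real.log 10) * (1 / Real.sin θ ^ 2)
          + 2 * 15 * Real.cos θ * (1 - Real.cos θ) + 2 * 15 * Real.sin θ ^ 2) ∧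
    StrictConvexOn ℝ (Ioc 0 (π / 2))
      (fun θ => (20 / Real.log 10) * Real.log (Δh / Real.sin θ)
        + 15 * (1 - Real.cos θ) ^ 2) := by
  have hc : 0 < 20 / Real.log 10 := by
    apply div_pos (by norm_num)
    exact Real.log_pos (by norm_num)
  have key : ∀ θ ∈ Ioc 0 (π / 2),
      0 < (20 / Real.log 10) * (1 / Real.sin θ ^ 2)
          + 2 * 15 * Real.cos θ * (1 - Real.cos θ) + 2 * 15 * Real.sin θ ^ 2 := by
    intro θ hθ
    have hsin := sin_pos_of_mem hθ
    have hcos : 0 ≤ Real.cos θ := Real.cos_nonneg_of_mem_Icc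
      ⟨by linarith [hθ.1, Real.pi_pos], hθ.2⟩
    have h1 : 0 < (20 / Real.log 10) * (1 / Real.sin θ ^ 2) :=
      mul_pos hc (by positivity)
    have hcle : Real.cos θ ≤ 1 := Real.cos_le_one θ
    nlinarith
  refine ⟨key, ?_⟩
  apply strictConvexOn_of_deriv2_pos (convex_Ioc 0 (π / 2))
  · intro θ hθ
    exact ((hasDerivAt_f Δh hΔh (ne_of_gt (sin_pos_of_mem hθ))).continuousAt).continuousWithinAt
  · intro x hx
    rw [interior_Ioc] at hx
    have hx' : x ∈ Ioc 0 (π / 2) := Ioo_subset_Ioc_self hx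
    have hsx : Real.sin x ≠ 0 := ne_of_gt (sin_pos_of_mem hx')
    have hev : ∀ᶠ y in nhds x, Real.sin y ≠ 0 :=
      Real.continuous_sin.continuousAt.eventually_ne hsx
    have heq : (deriv (fun θ => (20 / Real.log 10) * Real.log (Δh / Real.sin θ)
        + 15 * (1 - Real.cos θ) ^ 2)) =ᶠ[nhds x]
        (fun θ => (20 / Real.log 10) * (-(Real.cos θ / Real.sin θ))
        + 30 * (1 - Real.cos θ) * Real.sin θ) := by
      filter_upwards [hev] with y hy
      exact (hasDerivAt_f Δh hΔh hy).deriv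
    calc (0:ℝ) < (20 / Real.log 10) * (1 / Real.sin x ^ 2)
          + 2 * 15 * Real.cos x * (1 - Real.cos x) + 2 * 15 * Real.sin x ^ 2 :=
            key x hx'
      _ = deriv (deriv (fun θ => (20 / Real.log 10) * Real.log (Δh / Real.sin θ)
            + 15 * (1 - Real.cos θ) ^ 2)) x := by
            rw [heq.deriv_eq]
            exact ((hasDerivAt_D hsx).deriv).symm
end

section
/- The function L(θ) = (20/ln 10)·ln(Δh/sin θ) + 15(1 - cos θ)² attains a unique global minimum on (0, π/2), at the angle θ* whose cosine is the unique root in (0,1) of 30c³ - 30c² - (20/ln 10 + 30)c + 30 = 0. -/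
open Real Set

/-- L(θ) = (20/ln 10)·ln(Δh/sin θ) + 15(1-cos θ)² has a unique global minimum on
(0, π/2), at the angle whose cosine is the unique root in (0,1) of the optimality
cubic. -/
theorem lowSHF_unique_global_min (Δh : ℝ) (hΔh : 0 < Δh) :
    ∃! θstar : ℝ, θstar ∈ Ioo 0 (π / 2) ∧
      (∀ θ ∈ Ioo 0 (π / 2), θ ≠ θstar →
        (20 / Real.log 10) * Real.log (Δh / Real.sin θstar)
            + 15 * (1 - Real.cos θstar) ^ 2
          < (20 / Real.log 10) * Real.log (Δh / Real.sin θ)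
            + 15 * (1 - Real.cos θ) ^ 2) ∧
      30 * Real.cos θstar ^ 3 - 30 * Real.cos θstar ^ 2
        - (20 / Real.log 10 + 30) * Real.cos θstar + 30 = 0 := by
  have hlog10 : (0:ℝ) < Real.log 10 := Real.log_pos (by norm_num)
  set a : ℝ := 20 / Real.log 10 with ha_def
  have ha : 0 < a := by positivity
  set g : ℝ → ℝ := fun c => 30*c^3 - 30*c^2 - (a+30)*c + 30 with hg_def
  have hg_deriv : ∀ c : ℝ, HasDerivAt g (90*c^2 - 60*c - (a+30)) c := by
    intro c
    have h1 : HasDerivAt (fun c : ℝ => 30*c^3 - 30*c^2 - (a+30)*c + 30)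
        (30*(3*c^2) - 30*(2*c) - (a+30)*1 + 0) c := by
      exact ((((hasDerivAt_pow 3 c).const_mul 30).sub
        ((hasDerivAt_pow 2 c).const_mul 30)).sub
        ((hasDerivAt_id c).const_mul (a+30))).add (hasDerivAt_const c 30) |>.congr_deriv (by ring_nf)
    exact h1.congr_deriv (by ring)
  have hg_cont : Continuous g := by fun_prop
  have hg_anti : StrictAntiOn g (Icc 0 1) := by
    apply strictAntiOn_of_deriv_neg (convex_Icc 0 1) hg_cont.continuousOn
    intro c hc
    rw [interior_Icc] at hc
    rw [(hg_deriv c).deriv]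
    nlinarith [hc.1, hc.2, ha]
  -- root of the cubic in (0,1)
  obtain ⟨c, hc, hgc⟩ : ∃ c ∈ Ioo (0:ℝ) 1, g c = 0 := by
    have h01 : (0:ℝ) ≤ 1 := zero_le_one
    have hsub := intermediate_value_Ioo' h01 hg_cont.continuousOn
    have hmem : (0:ℝ) ∈ Ioo (g 1) (g 0) := by
      constructor
      · show g 1 < 0; simp only [hg_def]; nlinarith
      · show 0 < g 0; simp only [hg_def]; norm_num
    obtain ⟨c, hc, hgc⟩ := hsub hmem
    exact ⟨c, hc, hgc⟩
  set θs := Real.arccos c with hθs_def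
  have hcos : Real.cos θs = c := Real.cos_arccos (by linarith [hc.1]) (le_of_lt hc.2)
  have hmemθs : θs ∈ Ioo 0 (π/2) :=
    ⟨Real.arccos_pos.mpr hc.2, Real.arccos_lt_pi_div_two.mpr hc.1⟩
  -- derivative of L
  have hL_deriv : ∀ θ ∈ Ioo 0 (π/2),
      HasDerivAt (fun θ => a * Real.log (Δh / Real.sin θ) + 15 * (1 - Real.cos θ)^2)
        (g (Real.cos θ) / Real.sin θ) θ := by
    intro θ hθ
    have hs : 0 < Real.sin θ :=
      Real.sin_pos_of_pos_of_lt_pi hθ.1 (by linarith [Real.pi_pos, hθ.2])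
    have h2 : HasDerivAt (fun x => Δh / Real.sin x) (Δh * (-(Real.cos θ) / Real.sin θ^2)) θ := by
      simpa [div_eq_mul_inv] using ((Real.hasDerivAt_sin θ).inv hs.ne').const_mul Δh
    have h3 : HasDerivAt (fun x => Real.log (Δh / Real.sin x))
        ((Δh * (-(Real.cos θ) / Real.sin θ^2)) / (Δh / Real.sin θ)) θ :=
      h2.log (by positivity)
    have h4 : HasDerivAt (fun x => (1 - Real.cos x)^2)
        (2 * (1 - Real.cos θ)^1 * Real.sin θ) θ := by
      have hin : HasDerivAt (fun x => 1 - Real.cos x) (Real.sin θ) θ := by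
        simpa using (Real.hasDerivAt_cos θ).const_sub 1
      simpa using hin.fun_pow 2
    have h5 := (h3.const_mul a).add (h4.const_mul 15)
    refine h5.congr_deriv ?_
    have hsq : Real.sin θ^2 = 1 - Real.cos θ^2 := Real.sin_sq θ
    simp only [hg_def]
    field_simp
    linear_combination (30*(1-Real.cos θ)) * hsq
  -- decreasing then increasing
  have hcontL : ∀ s : Set ℝ, s ⊆ Ioo 0 (π/2) →
      ContinuousOn (fun θ => a * Real.log (Δh / Real.sin θ) + 15 * (1 - Real.cos θ)^2) s := by
    intro s hsub
    have hsin : ∀ x ∈ s, Real.sin x ≠ 0 := by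
      intro x hx
      have hx' := hsub hx
      exact (Real.sin_pos_of_pos_of_lt_pi hx'.1 (by linarith [Real.pi_pos, hx'.2])).ne'
    apply ContinuousOn.add
    · refine continuousOn_const.mul (ContinuousOn.log
        (continuousOn_const.div Real.continuous_sin.continuousOn hsin) ?_)
      intro x hx
      have hx' := hsub hx
      have := Real.sin_pos_of_pos_of_lt_pi hx'.1 (by linarith [Real.pi_pos, hx'.2])
      positivity
    · fun_prop
  have hIoc : Ioc 0 θs ⊆ Ioo 0 (π/2) := fun x hx => ⟨hx.1, lt_of_le_of_lt hx.2 hmemθs.2⟩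
  have hIco : Ico θs (π/2) ⊆ Ioo 0 (π/2) := fun x hx => ⟨lt_of_lt_of_le hmemθs.1 hx.1, hx.2⟩
  have hanti : StrictAntiOn (fun θ => a * Real.log (Δh / Real.sin θ) + 15 * (1 - Real.cos θ)^2)
      (Ioc 0 θs) := by
    apply strictAntiOn_of_deriv_neg (convex_Ioc 0 θs) (hcontL _ hIoc)
    intro x hx
    rw [interior_Ioc] at hx
    have hxm : x ∈ Ioo 0 (π/2) := hIoc ⟨hx.1, le_of_lt hx.2⟩
    rw [(hL_deriv x hxm).deriv]
    have hs : 0 < Real.sin x :=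
      Real.sin_pos_of_pos_of_lt_pi hxm.1 (by linarith [Real.pi_pos, hxm.2])
    apply div_neg_of_neg_of_pos _ hs
    have hclt : c < Real.cos x := by
      rw [← hcos]
      exact Real.strictAntiOn_cos ⟨le_of_lt hxm.1, by linarith [Real.pi_pos, hxm.2]⟩
        ⟨le_of_lt hmemθs.1, by linarith [Real.pi_pos, hmemθs.2]⟩ hx.2
    have hcx : Real.cos x ∈ Icc (0:ℝ) 1 := ⟨by linarith [hc.1], Real.cos_le_one x⟩
    have := hg_anti ⟨le_of_lt hc.1, le_of_lt hc.2⟩ hcx hclt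
    linarith [hgc ▸ this]
  have hmono : StrictMonoOn (fun θ => a * Real.log (Δh / Real.sin θ) + 15 * (1 - Real.cos θ)^2)
      (Ico θs (π/2)) := by
    apply strictMonoOn_of_deriv_pos (convex_Ico θs (π/2)) (hcontL _ hIco)
    intro x hx
    rw [interior_Ico] at hx
    have hxm : x ∈ Ioo 0 (π/2) := hIco ⟨le_of_lt hx.1, hx.2⟩
    rw [(hL_deriv x hxm).deriv]
    have hs : 0 < Real.sin x :=
      Real.sin_pos_of_pos_of_lt_pi hxm.1 (by linarith [Real.pi_pos, hxm.2])
    apply div_pos _ hs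
    have hclt : Real.cos x < c := by
      rw [← hcos]
      exact Real.strictAntiOn_cos
        ⟨le_of_lt hmemθs.1, by linarith [Real.pi_pos, hmemθs.2]⟩
        ⟨le_of_lt hxm.1, by linarith [Real.pi_pos, hxm.2]⟩ hx.1
    have hcx : Real.cos x ∈ Icc (0:ℝ) 1 :=
      ⟨le_of_lt (Real.cos_pos_of_mem_Ioo ⟨by linarith [Real.pi_pos, hxm.1], hxm.2⟩),
       Real.cos_le_one x⟩
    have := hg_anti hcx ⟨le_of_lt hc.1, le_of_lt hc.2⟩ hclt
    linarith [hgc ▸ this]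
  have hmin : ∀ θ ∈ Ioo 0 (π/2), θ ≠ θs →
      a * Real.log (Δh / Real.sin θs) + 15 * (1 - Real.cos θs)^2
        < a * Real.log (Δh / Real.sin θ) + 15 * (1 - Real.cos θ)^2 := by
    intro θ hθ hne
    rcases lt_or_gt_of_ne hne with h | h
    · exact hanti ⟨hθ.1, le_of_lt h⟩ ⟨hmemθs.1, le_refl _⟩ h
    · exact hmono ⟨le_refl _, hmemθs.2⟩ ⟨le_of_lt h, hθ.2⟩ h
  refine ⟨θs, ⟨hmemθs, hmin, ?_⟩, ?_⟩
  · rw [hcos]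
    simpa [hg_def] using hgc
  · rintro θ' ⟨hθ'mem, hθ'min, -⟩
    by_contra hne
    have h1 := hθ'min θs hmemθs (fun h => hne h.symm)
    have h2 := hmin θ' hθ'mem hne
    linarith
end

section
/- Fix constants w, g₃ > 0 and define for a UAV at (X, Y, Z) and user i at (x_i, y_i, z_i) the loss f_i(Z) = (w/ln 10)·ln d_i + g₃(1 - √((X-x_i)²+(Y-y_i)²)/d_i)², where d_i = √((X-x_i)²+(Y-y_i)²+(Z-z_i)²). If users come in pairs (x_i, y_i, z_i) and (x_i, y_i, z_b - z_i) (symmetric about height z_b/2), then the function Z ↦ Σ_i f_i(Z) has zero derivative at Z = z_b/2. -/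
open Real Finset

noncomputable def Dval (w g₃ a t : ℝ) : ℝ :=
  t * (w / Real.log 10) / (a + t ^ 2) +
    2 * g₃ * (1 - Real.sqrt a / Real.sqrt (a + t ^ 2)) * Real.sqrt a * t /
      (Real.sqrt (a + t ^ 2)) ^ 3

lemma Dval_neg (w g₃ a t : ℝ) : Dval w g₃ a (-t) = - Dval w g₃ a t := by
  simp only [Dval, neg_sq]
  ring

lemma Dval_key (w g₃ : ℝ) (a zi Z0 : ℝ) (ha : 0 < a) :
    HasDerivAt (fun Z => (w / Real.log 10) * Real.log (Real.sqrt (a + (Z - zi) ^ 2))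
      + g₃ * (1 - Real.sqrt a / Real.sqrt (a + (Z - zi) ^ 2)) ^ 2)
      (Dval w g₃ a (Z0 - zi)) Z0 := by
  set t := Z0 - zi with ht
  have hs : 0 < a + t ^ 2 := by positivity
  have hq : 0 < Real.sqrt (a + t ^ 2) := Real.sqrt_pos.mpr hs
  have h0 : HasDerivAt (fun Z : ℝ => Z - zi) 1 Z0 := (hasDerivAt_id _).sub_const _
  have h1 : HasDerivAt (fun Z : ℝ => (Z - zi) ^ 2) (2 * t) Z0 := by
    have := h0.fun_pow 2
    simpa [ht] using this
  have h2 : HasDerivAt (fun Z : ℝ => a + (Z - zi) ^ 2) (2 * t) Z0 := h1.const_add a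
  have hsqrt : HasDerivAt (fun Z : ℝ => Real.sqrt (a + (Z - zi) ^ 2))
      (2 * t / (2 * Real.sqrt (a + t ^ 2))) Z0 := by
    have := h2.sqrt (by simpa [ht] using hs.ne')
    simpa [ht] using this
  have hlog : HasDerivAt (fun Z : ℝ => Real.log (Real.sqrt (a + (Z - zi) ^ 2)))
      (2 * t / (2 * Real.sqrt (a + t ^ 2)) / Real.sqrt (a + t ^ 2)) Z0 := by
    have := hsqrt.log (by simpa [ht] using hq.ne')
    simpa [ht] using this
  have hdiv : HasDerivAt (fun Z : ℝ => Real.sqrt a / Real.sqrt (a + (Z - zi) ^ 2))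
      ((0 * Real.sqrt (a + t ^ 2) - Real.sqrt a * (2 * t / (2 * Real.sqrt (a + t ^ 2)))) /
        (Real.sqrt (a + t ^ 2)) ^ 2) Z0 := by
    have := (hasDerivAt_const Z0 (Real.sqrt a)).fun_div hsqrt (by simpa [ht] using hq.ne')
    simpa [ht] using this
  have hsub : HasDerivAt (fun Z : ℝ => 1 - Real.sqrt a / Real.sqrt (a + (Z - zi) ^ 2))
      (0 - (0 * Real.sqrt (a + t ^ 2) - Real.sqrt a * (2 * t / (2 * Real.sqrt (a + t ^ 2)))) /
        (Real.sqrt (a + t ^ 2)) ^ 2) Z0 := (hasDerivAt_const Z0 (1 : ℝ)).sub hdiv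
  have hpow := hsub.fun_pow 2
  have htot := (hlog.const_mul (w / Real.log 10)).fun_add (hpow.const_mul g₃)
  rw [show Z0 - zi = t from ht.symm] at htot
  convert htot using 1
  · rfl
  · rfl
  have hq2 : (Real.sqrt (a + t ^ 2)) ^ 2 = a + t ^ 2 := Real.sq_sqrt hs.le
  rw [Dval]
  set q := Real.sqrt (a + t ^ 2) with hqdef
  rw [← hq2]
  field_simp
  ring_nf
  field_simp
  ring

/-- If users come in pairs symmetric about height z_b/2, the low-SHF total path
loss, as a function of the UAV altitude Z, has zero derivative at Z = z_b/2. -/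
theorem symmetric_users_altitude_critical (w g₃ : ℝ) (hw : 0 < w) (hg : 0 < g₃)
    {ι : Type*} [Fintype ι] (X Y z_b : ℝ) (x y z : ι → ℝ) (σ : Equiv.Perm ι)
    (hx : ∀ i, x (σ i) = x i) (hy : ∀ i, y (σ i) = y i)
    (hz : ∀ i, z (σ i) = z_b - z i)
    (hpos : ∀ i, 0 < (X - x i) ^ 2 + (Y - y i) ^ 2) :
    HasDerivAt (fun Z => ∑ i : ι,
        ((w / Real.log 10) *
            Real.log (Real.sqrt ((X - x i) ^ 2 + (Y - y i) ^ 2 + (Z - z i) ^ 2))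
          + g₃ * (1 - Real.sqrt ((X - x i) ^ 2 + (Y - y i) ^ 2) /
              Real.sqrt ((X - x i) ^ 2 + (Y - y i) ^ 2 + (Z - z i) ^ 2)) ^ 2))
      0 (z_b / 2) := by
  set a : ι → ℝ := fun i => (X - x i) ^ 2 + (Y - y i) ^ 2 with haa
  have key : ∀ i : ι, HasDerivAt (fun Z =>
      (w / Real.log 10) * Real.log (Real.sqrt (a i + (Z - z i) ^ 2))
        + g₃ * (1 - Real.sqrt (a i) / Real.sqrt (a i + (Z - z i) ^ 2)) ^ 2)
      (Dval w g₃ (a i) (z_b / 2 - z i)) (z_b / 2) :=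
    fun i => Dval_key w g₃ (a i) (z i) (z_b / 2) (hpos i)
  have hsum := HasDerivAt.fun_sum (fun i (_ : i ∈ Finset.univ) => key i)
  have hzero : ∑ i ∈ Finset.univ, Dval w g₃ (a i) (z_b / 2 - z i) = 0 := by
    have hperm : ∑ i : ι, Dval w g₃ (a i) (z_b / 2 - z i)
        = ∑ i : ι, Dval w g₃ (a (σ i)) (z_b / 2 - z (σ i)) :=
      (Equiv.sum_comp σ fun i => Dval w g₃ (a i) (z_b / 2 - z i)).symm
    have heq : ∀ i : ι, Dval w g₃ (a (σ i)) (z_b / 2 - z (σ i))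
        = - Dval w g₃ (a i) (z_b / 2 - z i) := by
      intro i
      have ha' : a (σ i) = a i := by simp [haa, hx i, hy i]
      have hz' : z_b / 2 - z (σ i) = -(z_b / 2 - z i) := by rw [hz i]; ring
      rw [ha', hz', Dval_neg]
    rw [hperm]
    simp only [heq] at *
    rw [Finset.sum_neg_distrib] at hperm ⊢
    linarith [hperm]
  rw [hzero] at hsum
  exact hsum
end
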